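/- For all integers q ≥ 1 and r ≥ 1, (1/q)·(q+1)/(q+r) + ∑_{k=1}^{q−1} (1/(k(k+1)))·((k+1)/(k+r)) ≤ H_r/r, where H_r is the r-th harmonic number. -/

import Mathlib

/-- The `r`-th harmonic number `H_r = ∑_{i=1}^r 1/i`. -/
noncomputable def harmonicNumber (r : ℕ) : ℝ := ∑ i ∈ Finset.Icc 1 r, (1 : ℝ) / i

lemma tele1 (a : ℕ) (ha : 1 ≤ a) (n : ℕ) :
    ∑ k ∈ Finset.Ico a (a + n), (1 : ℝ) / ((k : ℝ) * (k + 1))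
      = 1 / (a : ℝ) - 1 / ((a : ℝ) + n) := by
  induction n with
  | zero => simp
  | succ n ih =>
    rw [show a + (n + 1) = (a + n) + 1 from rfl,
      Finset.sum_Ico_succ_top (by omega), ih]
    have h1 : (0 : ℝ) < (a : ℝ) + n := by
      have : (1 : ℝ) ≤ (a : ℝ) := by exact_mod_cast ha
      linarith
    push_cast
    field_simp
    ring

lemma tele2 (r : ℕ) (hr : 1 ≤ r) (m : ℕ) :
    ∑ k ∈ Finset.Icc 1 m, ((1 : ℝ) / k - 1 / ((k : ℝ) + r)) =
      (∑ i ∈ Finset.Icc 1 r, (1 : ℝ) / i)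
        - ∑ k ∈ Finset.Ico (m + 1) (m + 1 + r), (1 : ℝ) / k := by
  induction m with
  | zero =>
    have h : Finset.Ico (0 + 1) (0 + 1 + r) = Finset.Icc 1 r := by
      rw [show 0 + 1 + r = r + 1 by ring, Finset.Ico_add_one_right_eq_Icc]
    rw [h]
    simp
  | succ m ih =>
    rw [Finset.sum_Icc_succ_top (by omega), ih]
    have h1 : ∑ k ∈ Finset.Ico (m + 1) (m + 1 + r + 1), (1 : ℝ) / k
        = (∑ k ∈ Finset.Ico (m + 1) (m + 1 + r), (1 : ℝ) / k) + 1 / ((m : ℝ) + 1 + r) := by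
      rw [Finset.sum_Ico_succ_top (by omega)]
      push_cast
      ring_nf
    have h2 : ∑ k ∈ Finset.Ico (m + 1) (m + 1 + r + 1), (1 : ℝ) / k
        = 1 / ((m : ℝ) + 1) + ∑ k ∈ Finset.Ico (m + 2) (m + 1 + r + 1), (1 : ℝ) / k := by
      rw [Finset.sum_eq_sum_Ico_succ_bot (by omega)]
      push_cast
      ring_nf
    have h3 : m + 1 + 1 + r = m + 1 + r + 1 := by ring
    rw [h3]
    push_cast at h1 h2 ⊢
    linarith

theorem zeros_tail_bound (q r : ℕ) (hq : 1 ≤ q) (hr : 1 ≤ r) :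
    (1 / (q : ℝ)) * ((q + 1) / (q + r)) +
      ∑ k ∈ Finset.Icc 1 (q - 1), (1 / ((k : ℝ) * (k + 1))) * ((k + 1) / (k + r))
        ≤ harmonicNumber r / r := by
  have hrR : (1 : ℝ) ≤ (r : ℝ) := by exact_mod_cast hr
  have hqR : (1 : ℝ) ≤ (q : ℝ) := by exact_mod_cast hq
  have hrpos : (0 : ℝ) < r := by linarith
  have hqpos : (0 : ℝ) < q := by linarith
  have hqr : (0 : ℝ) < (q : ℝ) + r := by linarith
  -- rewrite each summand as (1/r) * (1/k - 1/(k+r))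
  have hsum : ∑ k ∈ Finset.Icc 1 (q - 1), (1 / ((k : ℝ) * (k + 1))) * ((k + 1) / (k + r))
      = (1 / (r : ℝ)) * ∑ k ∈ Finset.Icc 1 (q - 1), ((1 : ℝ) / k - 1 / ((k : ℝ) + r)) := by
    rw [Finset.mul_sum]
    refine Finset.sum_congr rfl ?_
    intro k hk
    have hk1 : 1 ≤ k := (Finset.mem_Icc.mp hk).1
    have hkR : (1 : ℝ) ≤ (k : ℝ) := by exact_mod_cast hk1
    have h1 : (0 : ℝ) < (k : ℝ) := by linarith
    have h2 : (0 : ℝ) < (k : ℝ) + 1 := by linarith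
    have h3 : (0 : ℝ) < (k : ℝ) + r := by linarith
    field_simp
    ring
  rw [hsum, tele2 r hr (q - 1)]
  have hq1 : q - 1 + 1 = q := Nat.sub_add_cancel hq
  rw [hq1]
  set S := ∑ k ∈ Finset.Ico q (q + r), (1 : ℝ) / k with hS
  -- termwise lower bound for S
  have hterm : ∀ k ∈ Finset.Ico q (q + r),
      ((q : ℝ) + 1) * (1 / ((k : ℝ) * (k + 1))) ≤ (1 : ℝ) / k := by
    intro k hk
    obtain ⟨hk1, _⟩ := Finset.mem_Ico.mp hk
    have hkR : (q : ℝ) ≤ (k : ℝ) := by exact_mod_cast hk1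
    have hk0 : (0 : ℝ) < (k : ℝ) := by linarith
    have hk01 : (0 : ℝ) < (k : ℝ) + 1 := by linarith
    rw [mul_one_div, div_le_div_iff₀ (by positivity) hk0]
    nlinarith
  have h := Finset.sum_le_sum hterm
  rw [← Finset.mul_sum, tele1 q hq r] at h
  -- h : (q+1) * (1/q - 1/(q+r)) ≤ S
  have hkey : (1 / (q : ℝ)) * (((q : ℝ) + 1) / ((q : ℝ) + r))
      = ((q : ℝ) + 1) * (1 / (q : ℝ) - 1 / ((q : ℝ) + r)) / r := by
    field_simp
    ring
  have hT : (1 / (q : ℝ)) * (((q : ℝ) + 1) / ((q : ℝ) + r)) ≤ S / r := by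
    rw [hkey]
    gcongr
  rw [harmonicNumber]
  set H := ∑ i ∈ Finset.Icc 1 r, (1 : ℝ) / i with hH
  have : 1 / (r : ℝ) * (H - S) = H / r - S / r := by field_simp
  linarith
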